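/- arXiv:2008.06375 — 6 statements merged into one kernel-verified Lean document; each statement's English description precedes it below -/
import Mathlib

section
/- Let μ > 1, α ∈ [0,1], and set θ = 2α(μ-1)/(μ + α(μ-1)). Define f₀(x) = log(1-x) + x/(1-θx) for x ∈ [0,1). Then f₀'(0) = 0, and if θ ≤ 1/2 then f₀'(x) < 0 for all x ∈ (0,1), so that f₀ is strictly decreasing on [0,1) and x = 0 is the only root of f₀ in [0,1). -/
/-! The derivative is `f₀'(x) = 1 / (1 - θ x)^2 - 1 / (1 - x)`, which vanishes at `0`.
For `θ ≤ 1/2` and `0 < x < 1` we have `1 - θ x ≥ 1 - x/2 > 0`, so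
`(1 - θ x)^2 ≥ (1 - x/2)^2 = 1 - x + x^2/4 > 1 - x`, i.e. `f₀' < 0` on `(0, 1)`.
Thus `f₀` is strictly decreasing on `[0, 1)`, and `f₀ 0 = 0` is its only zero there. -/

open Real Set

noncomputable def finalSize (θ x : ℝ) : ℝ := log (1 - x) + x / (1 - θ * x)

section

variable {θ x : ℝ}

@[simp]
lemma finalSize_zero (θ : ℝ) : finalSize θ 0 = 0 := by
  simp [finalSize]

lemma hasDerivAt_finalSize (hx : 1 - x ≠ 0) (hθx : 1 - θ * x ≠ 0) :
    HasDerivAt (finalSize θ) (((1 - θ * x) ^ 2)⁻¹ - (1 - x)⁻¹) x := by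
  have hlin : ∀ c : ℝ, HasDerivAt (fun y : ℝ => 1 - c * y) (-c) x := fun c => by
    simpa using ((hasDerivAt_id x).const_mul c).const_sub 1
  have hlog : HasDerivAt (fun y => log (1 - y)) (-1 / (1 - x)) x := by
    simpa using (hlin 1).log (by simpa using hx)
  refine (hlog.add ((hasDerivAt_id x).div (hlin θ) hθx)).congr_deriv ?_
  simp only [id]
  field_simp
  ring

lemma one_sub_mul_pos (hθ : θ ≤ 1 / 2) (hx : x ∈ Ico (0 : ℝ) 1) : 0 < 1 - θ * x := by
  nlinarith [hx.1, hx.2]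

lemma one_sub_lt_sq_one_sub_mul (hθ : θ ≤ 1 / 2) (hx : x ∈ Ioo (0 : ℝ) 1) :
    1 - x < (1 - θ * x) ^ 2 := by
  have hθx : 1 - x / 2 ≤ 1 - θ * x := by nlinarith [hx.1]
  calc 1 - x < (1 - x / 2) ^ 2 := by nlinarith [hx.1]
    _ ≤ (1 - θ * x) ^ 2 := pow_le_pow_left₀ (by linarith [hx.2]) hθx 2

lemma deriv_finalSize_zero (θ : ℝ) : deriv (finalSize θ) 0 = 0 := by
  rw [(hasDerivAt_finalSize (by norm_num) (by norm_num)).deriv]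
  norm_num

lemma hasDerivAt_finalSize_of_mem_Ico (hθ : θ ≤ 1 / 2) (hx : x ∈ Ico (0 : ℝ) 1) :
    HasDerivAt (finalSize θ) (((1 - θ * x) ^ 2)⁻¹ - (1 - x)⁻¹) x :=
  hasDerivAt_finalSize (by linarith [hx.2]) (one_sub_mul_pos hθ hx).ne'

lemma deriv_finalSize_neg (hθ : θ ≤ 1 / 2) (hx : x ∈ Ioo (0 : ℝ) 1) :
    deriv (finalSize θ) x < 0 := by
  rw [(hasDerivAt_finalSize_of_mem_Ico hθ (Ioo_subset_Ico_self hx)).deriv, sub_neg]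
  exact inv_strictAnti₀ (by linarith [hx.2]) (one_sub_lt_sq_one_sub_mul hθ hx)

lemma strictAntiOn_finalSize (hθ : θ ≤ 1 / 2) : StrictAntiOn (finalSize θ) (Ico 0 1) := by
  refine strictAntiOn_of_deriv_neg (convex_Ico 0 1)
    (fun x hx => (hasDerivAt_finalSize_of_mem_Ico hθ hx).continuousAt.continuousWithinAt) ?_
  rw [interior_Ico]
  exact fun x hx => deriv_finalSize_neg hθ hx

lemma eq_zero_of_finalSize_eq_zero (hθ : θ ≤ 1 / 2) (hx : x ∈ Ico (0 : ℝ) 1)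
    (hfx : finalSize θ x = 0) : x = 0 := by
  have h0 : (0 : ℝ) ∈ Ico (0 : ℝ) 1 := ⟨le_rfl, one_pos⟩
  exact (strictAntiOn_finalSize hθ).injOn hx h0 (by rw [hfx, finalSize_zero])

end

theorem stmt0_general (θ : ℝ)
    (f₀ : ℝ → ℝ) (hf : ∀ x, f₀ x = Real.log (1-x) + x/(1-θ*x)) :
    deriv f₀ 0 = 0 ∧
    (θ ≤ 1/2 →
      (∀ x ∈ Set.Ioo (0:ℝ) 1, deriv f₀ x < 0) ∧
      StrictAntiOn f₀ (Set.Ico (0:ℝ) 1) ∧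
      (∀ x ∈ Set.Ico (0:ℝ) 1, f₀ x = 0 → x = 0)) := by
  obtain rfl : f₀ = finalSize θ := funext hf
  exact ⟨deriv_finalSize_zero θ, fun hθ => ⟨fun x hx => deriv_finalSize_neg hθ hx,
    strictAntiOn_finalSize hθ, fun x hx => eq_zero_of_finalSize_eq_zero hθ hx⟩⟩

theorem stmt0 (μ α : ℝ) (hμ : 1 < μ) (hα : α ∈ Set.Icc (0:ℝ) 1)
    (θ : ℝ) (hθ : θ = 2*α*(μ-1)/(μ + α*(μ-1)))
    (f₀ : ℝ → ℝ) (hf : ∀ x, f₀ x = Real.log (1-x) + x/(1-θ*x)) :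
    deriv f₀ 0 = 0 ∧
    (θ ≤ 1/2 →
      (∀ x ∈ Set.Ioo (0:ℝ) 1, deriv f₀ x < 0) ∧
      StrictAntiOn f₀ (Set.Ico (0:ℝ) 1) ∧
      (∀ x ∈ Set.Ico (0:ℝ) 1, f₀ x = 0 → x = 0)) :=
  stmt0_general θ f₀ hf
end

section
/- Let μ > 1, α ∈ [0,1], and θ = 2α(μ-1)/(μ + α(μ-1)). If θ > 1/2, then f₀(x) = log(1-x) + x/(1-θx) has exactly one root in the open interval (0,1). -/
/-!
The point `c = (2θ - 1) / θ²` lies in `(0, 1)` because `1/2 < θ < 1`. The derivative of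
`f₀` factors as `x (2θ - 1 - θ²x) / ((1 - θx)² (1 - x))`, so `f₀` increases on `[0, c]` and
decreases on `[c, 1)`. Since `f₀ 0 = 0`, there is no root in `(0, c]`, while `f₀ c > 0` and
`f₀ → -∞` at `1⁻` give exactly one root in `(c, 1)`.
-/

open Filter Topology Set

theorem existsUnique_zero_of_strictMonoOn_of_strictAntiOn {f : ℝ → ℝ} {a b c : ℝ}
    (hac : a < c) (hcb : c < b) (hcont : ContinuousOn f (Ico c b)) (ha : f a = 0)
    (hmono : StrictMonoOn f (Icc a c)) (hanti : StrictAntiOn f (Ico c b))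
    (hlim : Tendsto f (𝓝[<] b) atBot) :
    ∃! x, x ∈ Ioo a b ∧ f x = 0 := by
  have hfc : 0 < f c := ha ▸ hmono (left_mem_Icc.2 hac.le) (right_mem_Icc.2 hac.le) hac
  obtain ⟨x₁, hfx₁, hx₁⟩ :=
    ((hlim.eventually (eventually_lt_atBot 0)).and (Ioo_mem_nhdsLT hcb)).exists
  obtain ⟨x₀, hx₀, hfx₀⟩ := intermediate_value_Ioo' hx₁.1.le
    (hcont.mono (Icc_subset_Ico_right hx₁.2)) ⟨hfx₁, hfc⟩
  refine ⟨x₀, ⟨⟨hac.trans hx₀.1, hx₀.2.trans hx₁.2⟩, hfx₀⟩, ?_⟩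
  rintro y ⟨hy, hfy⟩
  have hcy : c < y := by
    by_contra! hyc
    exact (hmono (left_mem_Icc.2 hac.le) ⟨hy.1.le, hyc⟩ hy.1).ne (ha.trans hfy.symm)
  exact hanti.injOn ⟨hcy.le, hy.2⟩ ⟨hx₀.1.le, hx₀.2.trans hx₁.2⟩ (hfy.trans hfx₀.symm)

theorem two_mul_sub_one_div_sq_lt_one {θ : ℝ} (hθ₀ : θ ≠ 0) (hθ₁ : θ ≠ 1) :
    (2 * θ - 1) / θ ^ 2 < 1 := by
  rw [div_lt_one (by positivity)]
  nlinarith [sq_pos_of_ne_zero (sub_ne_zero.2 hθ₁)]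

noncomputable def logAddRatio (θ x : ℝ) : ℝ := Real.log (1 - x) + x / (1 - θ * x)

namespace logAddRatio

variable {θ x : ℝ}

theorem hasDerivAt (hx : x ≠ 1) (hθx : θ * x ≠ 1) :
    HasDerivAt (logAddRatio θ)
      (x * (2 * θ - 1 - θ ^ 2 * x) / ((1 - θ * x) ^ 2 * (1 - x))) x := by
  have h₁ : 1 - x ≠ 0 := sub_ne_zero.2 hx.symm
  have h₂ : 1 - θ * x ≠ 0 := sub_ne_zero.2 hθx.symm
  have hlog : HasDerivAt (fun y => Real.log (1 - y)) ((1 - x)⁻¹ * (-1)) x :=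
    (Real.hasDerivAt_log h₁).comp x ((hasDerivAt_id x).const_sub 1)
  have hratio : HasDerivAt (fun y => y / (1 - θ * y))
      ((1 * (1 - θ * x) - x * -(θ * 1)) / (1 - θ * x) ^ 2) x :=
    (hasDerivAt_id x).div (((hasDerivAt_id x).const_mul θ).const_sub 1) h₂
  refine (hlog.add hratio).congr_deriv ?_
  rw [inv_mul_eq_div, div_add_div _ _ h₁ (pow_ne_zero 2 h₂),
    div_eq_div_iff (mul_ne_zero h₁ (pow_ne_zero 2 h₂)) (mul_ne_zero (pow_ne_zero 2 h₂) h₁)]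
  ring

theorem continuousOn_Iio (hθ₀ : 0 ≤ θ) (hθ₁ : θ ≤ 1) : ContinuousOn (logAddRatio θ) (Iio 1) := by
  intro x hx
  have hθx : θ * x < 1 := by
    rcases le_or_gt x 0 with h | h <;> nlinarith [mem_Iio.1 hx]
  exact (hasDerivAt hx.ne hθx.ne).continuousAt.continuousWithinAt

theorem strictMonoOn (hθ₀ : 0 < θ) (hθ₁ : θ < 1) :
    StrictMonoOn (logAddRatio θ) (Icc 0 ((2 * θ - 1) / θ ^ 2)) := by
  have hc := two_mul_sub_one_div_sq_lt_one hθ₀.ne' hθ₁.ne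
  refine strictMonoOn_of_deriv_pos (convex_Icc _ _)
    ((continuousOn_Iio hθ₀.le hθ₁.le).mono fun x hx => hx.2.trans_lt hc) fun x hx => ?_
  rw [interior_Icc] at hx
  have hx₁ : x < 1 := hx.2.trans hc
  have hθx : θ * x < 1 := by nlinarith [hx.1]
  have hnum : 0 < 2 * θ - 1 - θ ^ 2 * x := by
    have := (lt_div_iff₀ (by positivity)).1 hx.2; linarith
  rw [(hasDerivAt hx₁.ne hθx.ne).deriv]
  exact div_pos (mul_pos hx.1 hnum) (mul_pos (by nlinarith) (by linarith))

theorem strictAntiOn (hθ₀ : 1 / 2 ≤ θ) (hθ₁ : θ ≤ 1) :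
    StrictAntiOn (logAddRatio θ) (Ico ((2 * θ - 1) / θ ^ 2) 1) := by
  have hθ : 0 < θ := by linarith
  refine strictAntiOn_of_deriv_neg (convex_Ico _ _)
    ((continuousOn_Iio hθ.le hθ₁).mono fun x hx => hx.2) fun x hx => ?_
  rw [interior_Ico] at hx
  have hx₀ : 0 < x := lt_of_le_of_lt (div_nonneg (by linarith) (by positivity)) hx.1
  have hθx : θ * x < 1 := by nlinarith [hx.2]
  have hnum : 2 * θ - 1 - θ ^ 2 * x < 0 := by
    have := (div_lt_iff₀ (by positivity)).1 hx.1; linarith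
  rw [(hasDerivAt hx.2.ne hθx.ne).deriv]
  exact div_neg_of_neg_of_pos (mul_neg_of_pos_of_neg hx₀ hnum)
    (mul_pos (by nlinarith) (by linarith [hx.2]))

theorem tendsto_nhdsLT_one (hθ : θ ≠ 1) : Tendsto (logAddRatio θ) (𝓝[<] 1) atBot := by
  have hsub : Tendsto (fun x : ℝ => 1 - x) (𝓝[<] 1) (𝓝[>] 0) := by
    refine tendsto_nhdsWithin_of_tendsto_nhds_of_eventually_within _ ?_ ?_
    · have : Tendsto (fun x : ℝ => 1 - x) (𝓝 1) (𝓝 (1 - 1)) := tendsto_const_nhds.sub tendsto_id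
      exact (sub_self (1 : ℝ) ▸ this).mono_left nhdsWithin_le_nhds
    · filter_upwards [self_mem_nhdsWithin] with x hx using sub_pos.2 (mem_Iio.1 hx)
  have hratio : ContinuousAt (fun x : ℝ => x / (1 - θ * x)) 1 :=
    continuousAt_id.div (continuousAt_const.sub (continuousAt_const.mul continuousAt_id))
      (by simpa [sub_eq_zero] using hθ.symm)
  exact (Real.tendsto_log_nhdsGT_zero.comp hsub).atBot_add
    (hratio.tendsto.mono_left nhdsWithin_le_nhds)

end logAddRatio

theorem stmt1 (μ α : ℝ) (hμ : 1 < μ) (hα : α ∈ Set.Icc (0:ℝ) 1)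
    (θ : ℝ) (hθ : θ = 2*α*(μ-1)/(μ + α*(μ-1))) (hθhalf : 1/2 < θ)
    (f₀ : ℝ → ℝ) (hf : ∀ x, f₀ x = Real.log (1-x) + x/(1-θ*x)) :
    ∃! x, x ∈ Set.Ioo (0:ℝ) 1 ∧ f₀ x = 0 := by
  have hθ₁ : θ < 1 := by
    rw [hθ, div_lt_one (by nlinarith [hα.1])]
    nlinarith [hα.2]
  have hθ₀ : 0 < θ := by linarith
  obtain rfl : f₀ = logAddRatio θ := funext hf
  exact existsUnique_zero_of_strictMonoOn_of_strictAntiOn (div_pos (by linarith) (by positivity))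
    (two_mul_sub_one_div_sq_lt_one hθ₀.ne' hθ₁.ne)
    ((logAddRatio.continuousOn_Iio hθ₀.le hθ₁.le).mono fun x hx => hx.2)
    (by simp [logAddRatio]) (logAddRatio.strictMonoOn hθ₀ hθ₁)
    (logAddRatio.strictAntiOn hθhalf.le hθ₁.le) (logAddRatio.tendsto_nhdsLT_one hθ₁.ne)
end

section
/- Fix μ > 1, λ > 0, ω > 0, α ∈ [0,1] with λ(μ-1) > ω (i.e. R₀ = μλ/(λ+ω) > 1). Define f(x) = log(1-x) + (λμ + ωα)x / (λ + ω(1-α) + 2ωα(1-x)) for x ∈ [0,1). Then f has a unique root τ in (0,1), and moreover f'(τ) < 0. -/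
/-!
Write the function as `g x = log (1 - x) + a x / (d - c x)` with `a = λμ + ωα`, `c = 2ωα`,
`d = λ + ω(1 + α)`, so that `0 < d` and `c < d < a`, the last inequality being `R₀ > 1`.
Then `g' = N / ((1 - x)(d - c x)²)` with `N x = a d (1 - x) - (d - c x)²`, and
`N x / x = d (a - d) / x - a + 2 c d - c² x` is strictly decreasing on `(0, ∞)`, so `N` changes
sign exactly once, at some `x₀ ∈ (0, 1)`. Hence `g` rises from `g 0 = 0` on `[0, x₀]` and then
falls to `-∞` as `x → 1⁻`: it has exactly one root in `(0, 1)`, which lies beyond `x₀`, where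
`g' < 0`.
-/

open Real Set Filter Topology

theorem exists_root_unique_of_strictMonoOn_of_strictAntiOn {g : ℝ → ℝ} {x₀ : ℝ}
    (hx₀ : x₀ ∈ Ioo 0 1) (hg0 : g 0 = 0) (hmono : StrictMonoOn g (Icc 0 x₀))
    (hanti : StrictAntiOn g (Ico x₀ 1)) (hcont : ContinuousOn g (Ico x₀ 1))
    (hlim : Tendsto g (𝓝[<] 1) atBot) :
    ∃ τ ∈ Ioo x₀ 1, g τ = 0 ∧ ∀ x ∈ Ioo 0 1, g x = 0 → x = τ := by
  have hpos : ∀ x ∈ Ioc 0 x₀, 0 < g x := fun x hx =>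
    hg0 ▸ hmono ⟨le_rfl, hx₀.1.le⟩ ⟨hx.1.le, hx.2⟩ hx.1
  obtain ⟨x₁, hgx₁, hx₁⟩ :=
    ((hlim.eventually (eventually_lt_atBot 0)).and (Ioo_mem_nhdsLT hx₀.2)).exists
  obtain ⟨τ, hτ, hgτ⟩ := intermediate_value_Ioo' hx₁.1.le
    (hcont.mono (Icc_subset_Ico_right hx₁.2)) ⟨hgx₁, hpos x₀ ⟨hx₀.1, le_rfl⟩⟩
  have hτ1 : τ ∈ Ioo x₀ 1 := ⟨hτ.1, hτ.2.trans hx₁.2⟩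
  refine ⟨τ, hτ1, hgτ, fun x hx hgx => ?_⟩
  rcases le_or_gt x x₀ with hle | hlt
  · exact absurd hgx (hpos x ⟨hx.1, hle⟩).ne'
  · exact hanti.injOn ⟨hlt.le, hx.2⟩ ⟨hτ1.1.le, hτ1.2⟩ (hgx.trans hgτ.symm)

namespace FinalSize

noncomputable def fn (a c d x : ℝ) : ℝ := log (1 - x) + a * x / (d - c * x)

def num (a c d x : ℝ) : ℝ := a * d * (1 - x) - (d - c * x) ^ 2

variable {a c d x : ℝ}

theorem sub_mul_pos (hd : 0 < d) (hcd : c < d) (hx0 : 0 ≤ x) (hx1 : x ≤ 1) :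
    0 < d - c * x := by
  nlinarith [mul_nonneg (sub_nonneg.mpr hx1) hd.le, mul_nonneg hx0 (sub_pos.mpr hcd).le]

theorem hasDerivAt_fn (hx : x < 1) (hdx : d - c * x ≠ 0) :
    HasDerivAt (fn a c d) (num a c d x / ((1 - x) * (d - c * x) ^ 2)) x := by
  have h1x : 1 - x ≠ 0 := by linarith
  have hlog : HasDerivAt (fun y => log (1 - y)) (-1 / (1 - x)) x := by
    simpa using ((hasDerivAt_id x).const_sub 1).log h1x
  have hrat : HasDerivAt (fun y => a * y / (d - c * y))
      ((a * (d - c * x) - a * x * -c) / (d - c * x) ^ 2) x := by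
    have hnum : HasDerivAt (fun y => a * y) a x := by
      simpa using (hasDerivAt_id x).const_mul a
    have hden : HasDerivAt (fun y => d - c * y) (-c) x := by
      simpa using ((hasDerivAt_id x).const_mul c).const_sub d
    exact hnum.div hden hdx
  refine (hlog.add hrat).congr_deriv ?_
  have hden : (1 - x) * (d - c * x) ^ 2 ≠ 0 := mul_ne_zero h1x (pow_ne_zero 2 hdx)
  rw [div_add_div _ _ h1x (pow_ne_zero 2 hdx), div_eq_div_iff hden hden, num]
  ring

theorem continuousOn_fn (hd : 0 < d) (hcd : c < d) : ContinuousOn (fn a c d) (Ico 0 1) :=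
  fun _ hx =>
    (hasDerivAt_fn hx.2 (sub_mul_pos hd hcd hx.1 hx.2.le).ne').continuousAt.continuousWithinAt

theorem tendsto_fn_atBot (hcd : c < d) : Tendsto (fn a c d) (𝓝[<] 1) atBot := by
  have hlog : Tendsto (fun x : ℝ => log (1 - x)) (𝓝[<] 1) atBot := by
    refine tendsto_log_nhdsGT_zero.comp (tendsto_nhdsWithin_of_tendsto_nhds_of_eventually_within _
      ?_ ?_)
    · have h : Tendsto (fun x : ℝ => 1 - x) (𝓝 1) (𝓝 (1 - 1)) :=
        (continuous_const.sub continuous_id).tendsto 1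
      simpa using h.mono_left nhdsWithin_le_nhds
    · filter_upwards [self_mem_nhdsWithin] with x (hx : x < 1)
      exact sub_pos.mpr hx
  have hrat :
      Tendsto (fun x : ℝ => a * x / (d - c * x)) (𝓝[<] 1) (𝓝 (a * 1 / (d - c * 1))) :=
    ((continuous_const.mul continuous_id).continuousAt.div
      (continuous_const.sub (continuous_const.mul continuous_id)).continuousAt
      (by simpa using (sub_pos.mpr hcd).ne')).tendsto.mono_left nhdsWithin_le_nhds
  exact hlog.atBot_add hrat

theorem exists_num_eq_zero (hd : 0 < d) (hcd : c < d) (hda : d < a) :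
    ∃ x₀ ∈ Ioo 0 1, num a c d x₀ = 0 := by
  have hcont : Continuous (num a c d) := by unfold num; fun_prop
  have h0 : 0 < num a c d 0 := by simp only [num]; nlinarith
  have h1 : num a c d 1 < 0 := by simp only [num]; nlinarith
  exact intermediate_value_Ioo' zero_le_one hcont.continuousOn ⟨h1, h0⟩

/-- `num x / x` is strictly decreasing on `(0, ∞)`, with denominators cleared. -/
theorem mul_num_sub_mul_num (x₀ : ℝ) :
    x₀ * num a c d x - x * num a c d x₀ = (x₀ - x) * (c ^ 2 * x * x₀ + d * (a - d)) := by
  simp only [num]; ring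

theorem num_pos_of_lt_root (hd : 0 < d) (hda : d < a) {x₀ : ℝ} (hx₀ : num a c d x₀ = 0)
    (hx : 0 < x) (hxx₀ : x < x₀) : 0 < num a c d x := by
  have := mul_num_sub_mul_num (a := a) (c := c) (d := d) (x := x) x₀
  rw [hx₀, mul_zero, sub_zero] at this
  have : 0 < x₀ * num a c d x := this ▸ mul_pos (sub_pos.mpr hxx₀)
    (add_pos_of_nonneg_of_pos (mul_nonneg (mul_nonneg (sq_nonneg c) hx.le) (hx.trans hxx₀).le)
      (mul_pos hd (sub_pos.mpr hda)))
  exact pos_of_mul_pos_right this (hx.trans hxx₀).le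

theorem num_neg_of_root_lt (hd : 0 < d) (hda : d < a) {x₀ : ℝ} (hx₀0 : 0 < x₀)
    (hx₀ : num a c d x₀ = 0) (hxx₀ : x₀ < x) : num a c d x < 0 := by
  have := mul_num_sub_mul_num (a := a) (c := c) (d := d) (x := x) x₀
  rw [hx₀, mul_zero, sub_zero] at this
  have : x₀ * num a c d x < 0 :=
    this ▸ mul_neg_of_neg_of_pos (sub_neg.mpr hxx₀)
      (add_pos_of_nonneg_of_pos
        (mul_nonneg (mul_nonneg (sq_nonneg c) (hx₀0.trans hxx₀).le) hx₀0.le)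
        (mul_pos hd (sub_pos.mpr hda)))
  exact neg_of_mul_neg_right this hx₀0.le

theorem exists_root_unique (hd : 0 < d) (hcd : c < d) (hda : d < a) :
    ∃ τ, (τ ∈ Ioo 0 1 ∧ fn a c d τ = 0 ∧ deriv (fn a c d) τ < 0) ∧
      ∀ x ∈ Ioo 0 1, fn a c d x = 0 → x = τ := by
  obtain ⟨x₀, hx₀, hN⟩ := exists_num_eq_zero hd hcd hda
  have hderiv : ∀ x ∈ Ico 0 1,
      deriv (fn a c d) x = num a c d x / ((1 - x) * (d - c * x) ^ 2) := fun x hx =>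
    (hasDerivAt_fn hx.2 (sub_mul_pos hd hcd hx.1 hx.2.le).ne').deriv
  have hdenom : ∀ x ∈ Ico 0 1, 0 < (1 - x) * (d - c * x) ^ 2 := fun x hx =>
    mul_pos (sub_pos.mpr hx.2) (pow_pos (sub_mul_pos hd hcd hx.1 hx.2.le) 2)
  have hIcc : Icc 0 x₀ ⊆ Ico 0 1 := Icc_subset_Ico_right hx₀.2
  have hIco : Ico x₀ 1 ⊆ Ico 0 1 := Ico_subset_Ico_left hx₀.1.le
  have hderiv_neg : ∀ x ∈ Ioo x₀ 1, deriv (fn a c d) x < 0 := fun x hx => by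
    rw [hderiv x (hIco (Ioo_subset_Ico_self hx))]
    exact div_neg_of_neg_of_pos (num_neg_of_root_lt hd hda hx₀.1 hN hx.1)
      (hdenom x (hIco (Ioo_subset_Ico_self hx)))
  have hmono : StrictMonoOn (fn a c d) (Icc 0 x₀) := by
    refine strictMonoOn_of_deriv_pos (convex_Icc 0 x₀) ((continuousOn_fn hd hcd).mono hIcc)
      fun x hx => ?_
    rw [interior_Icc] at hx
    rw [hderiv x (hIcc (Ioo_subset_Icc_self hx))]
    exact div_pos (num_pos_of_lt_root hd hda hN hx.1 hx.2)
      (hdenom x (hIcc (Ioo_subset_Icc_self hx)))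
  have hanti : StrictAntiOn (fn a c d) (Ico x₀ 1) :=
    strictAntiOn_of_deriv_neg (convex_Ico x₀ 1) ((continuousOn_fn hd hcd).mono hIco)
      (by simpa only [interior_Ico] using hderiv_neg)
  obtain ⟨τ, hτ, hroot, huniq⟩ := exists_root_unique_of_strictMonoOn_of_strictAntiOn hx₀
    (by simp [fn]) hmono hanti ((continuousOn_fn hd hcd).mono hIco) (tendsto_fn_atBot hcd)
  exact ⟨τ, ⟨⟨hx₀.1.trans hτ.1, hτ.2⟩, hroot, hderiv_neg τ hτ⟩, huniq⟩

end FinalSize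

theorem stmt3_general (μ lam ω α : ℝ) (hlam : 0 < lam) (hω : 0 < ω)
    (hα : α ∈ Set.Icc (0:ℝ) 1) (hR : ω < lam*(μ-1))
    (f : ℝ → ℝ)
    (hf : ∀ x, f x = Real.log (1-x) +
      (lam*μ + ω*α)*x/(lam + ω*(1-α) + 2*ω*α*(1-x))) :
    ∃ τ, (τ ∈ Set.Ioo (0:ℝ) 1 ∧ f τ = 0 ∧ deriv f τ < 0) ∧
      ∀ x ∈ Set.Ioo (0:ℝ) 1, f x = 0 → x = τ := by
  obtain ⟨hα0, hα1⟩ := hα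
  have hf' : f = FinalSize.fn (lam*μ + ω*α) (2*ω*α) (lam + ω*(1+α)) := by
    funext x
    rw [hf, FinalSize.fn]
    ring_nf
  rw [hf']
  exact FinalSize.exists_root_unique (by positivity) (by nlinarith) (by nlinarith)

theorem stmt3 (μ lam ω α : ℝ) (hμ : 1 < μ) (hlam : 0 < lam) (hω : 0 < ω)
    (hα : α ∈ Set.Icc (0:ℝ) 1) (hR : ω < lam*(μ-1))
    (f : ℝ → ℝ)
    (hf : ∀ x, f x = Real.log (1-x) +
      (lam*μ + ω*α)*x/(lam + ω*(1-α) + 2*ω*α*(1-x))) :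
    ∃ τ, (τ ∈ Set.Ioo (0:ℝ) 1 ∧ f τ = 0 ∧ deriv f τ < 0) ∧
      ∀ x ∈ Set.Ioo (0:ℝ) 1, f x = 0 → x = τ :=
  stmt3_general μ lam ω α hlam hω hα hR f hf
end

section
/- Fix μ > 1, λ > 0, ω > 0, α ∈ [0,1]. Define f as in the SI final-size equation: f(x) = log(1-x) + (λμ + ωα)x / (λ + ω(1-α) + 2ωα(1-x)). Then f'(0) > 0 if and only if λ(μ-1) > ω. -/
theorem hasDerivAt_log_one_sub_add_mul_div (a b c : ℝ) (hab : a + b ≠ 0) :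
    HasDerivAt (fun x => Real.log (1 - x) + c * x / (a + b * (1 - x))) (-1 + c / (a + b)) 0 := by
  have hlog : HasDerivAt (fun x : ℝ => Real.log (1 - x)) (-1) 0 := by
    simpa using ((hasDerivAt_id (0 : ℝ)).const_sub 1).log (by norm_num)
  have hnum : HasDerivAt (fun x : ℝ => c * x) c 0 := by
    simpa using (hasDerivAt_id (0 : ℝ)).const_mul c
  have hden : HasDerivAt (fun x : ℝ => a + b * (1 - x)) (-b) 0 := by
    simpa using (((hasDerivAt_id (0 : ℝ)).const_sub 1).const_mul b).const_add a
  refine (hlog.fun_add (hnum.fun_div hden (by simpa using hab))).congr_deriv ?_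
  rw [sub_zero, mul_one, mul_zero, zero_mul, sub_zero, sq, mul_div_mul_right _ _ hab]

theorem stmt4_general (μ lam ω α : ℝ) (hlam : 0 < lam) (hω : 0 < ω)
    (hα : α ∈ Set.Icc (0:ℝ) 1)
    (f : ℝ → ℝ)
    (hf : ∀ x, f x = Real.log (1-x) +
      (lam*μ + ω*α)*x/(lam + ω*(1-α) + 2*ω*α*(1-x))) :
    0 < deriv f 0 ↔ ω < lam*(μ-1) := by
  have hsum : lam + ω * (1 - α) + 2 * ω * α = lam + ω * (1 + α) := by ring
  have hpos : 0 < lam + ω * (1 + α) := by nlinarith [hα.1]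
  have hderiv : deriv f 0 = -1 + (lam * μ + ω * α) / (lam + ω * (1 + α)) := by
    rw [funext hf, ← hsum]
    exact (hasDerivAt_log_one_sub_add_mul_div _ _ _ (hsum ▸ hpos.ne')).deriv
  rw [hderiv, neg_add_eq_sub, sub_pos, one_lt_div hpos]
  constructor <;> intro h <;> linarith

theorem stmt4 (μ lam ω α : ℝ) (hμ : 1 < μ) (hlam : 0 < lam) (hω : 0 < ω)
    (hα : α ∈ Set.Icc (0:ℝ) 1)
    (f : ℝ → ℝ)
    (hf : ∀ x, f x = Real.log (1-x) +
      (lam*μ + ω*α)*x/(lam + ω*(1-α) + 2*ω*α*(1-x))) :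
    0 < deriv f 0 ↔ ω < lam*(μ-1) :=
  stmt4_general μ lam ω α hlam hω hα f hf
end

section
/- Fix μ > 1, ω > 0 and α ∈ (1/2, 1) with μ < α/(1-α). With x₀ = (1+α)/(2α) - 1/(2μ) and g(x,λ) = log(1-x) + (λμ + ωα)x / (λ + ω(1-α) + 2ωα(1-x)), then for all λ > 0 the value g(x₀, λ) is independent of λ and equals h(μ,α) := log( (α - (1-α)μ)/(2αμ) ) + (μ + α(μ-1))/(2α). -/
/-! At `x₀` the denominator of `g` equals `(λμ + ωα)/μ`, so the fraction collapses to `μ x₀`,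
which does not involve `λ`; the value of `g` is then `log (1 - x₀) + μ x₀`. -/

section

variable {μ α : ℝ}

lemma one_sub_critical_point (hμ : μ ≠ 0) (hα : α ≠ 0) :
    1 - ((1+α)/(2*α) - 1/(2*μ)) = (α - (1-α)*μ)/(2*α*μ) := by
  field_simp; ring

lemma mul_critical_point (hμ : μ ≠ 0) (hα : α ≠ 0) :
    μ * ((1+α)/(2*α) - 1/(2*μ)) = (μ + α*(μ-1))/(2*α) := by
  field_simp; ring

lemma denominator_at_critical_point (hμ : μ ≠ 0) (hα : α ≠ 0) (ω l : ℝ) :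
    l + ω*(1-α) + 2*ω*α*(1 - ((1+α)/(2*α) - 1/(2*μ))) = (l*μ + ω*α)/μ := by
  rw [one_sub_critical_point hμ hα]; field_simp; ring

lemma fraction_at_critical_point (hμ : μ ≠ 0) (hα : α ≠ 0) {ω l : ℝ} (hnum : l*μ + ω*α ≠ 0) :
    (l*μ + ω*α) * ((1+α)/(2*α) - 1/(2*μ)) /
        (l + ω*(1-α) + 2*ω*α*(1 - ((1+α)/(2*α) - 1/(2*μ)))) =
      (μ + α*(μ-1))/(2*α) := by
  rw [denominator_at_critical_point hμ hα, div_div_eq_mul_div, mul_right_comm, mul_assoc,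
    mul_div_cancel_left₀ _ hnum, mul_critical_point hμ hα]

end

theorem stmt11_general (μ ω α : ℝ) (hμ : 1 < μ) (hω : 0 < ω)
    (hα : α ∈ Set.Ioo (1/2 : ℝ) 1)
    (x₀ : ℝ) (hx₀ : x₀ = (1+α)/(2*α) - 1/(2*μ))
    (g : ℝ → ℝ → ℝ)
    (hg : ∀ x l, g x l = Real.log (1-x) +
      (l*μ + ω*α)*x/(l + ω*(1-α) + 2*ω*α*(1-x))) :
    ∀ l : ℝ, 0 < l →
      g x₀ l = Real.log ((α - (1-α)*μ)/(2*α*μ)) + (μ + α*(μ-1))/(2*α) := by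
  intro l hl
  have hμ0 : 0 < μ := one_pos.trans hμ
  have hα0 : 0 < α := one_half_pos.trans hα.1
  have hnum : l*μ + ω*α ≠ 0 := by positivity
  rw [hg, hx₀, fraction_at_critical_point hμ0.ne' hα0.ne' hnum,
    one_sub_critical_point hμ0.ne' hα0.ne']

theorem stmt11 (μ ω α : ℝ) (hμ : 1 < μ) (hω : 0 < ω)
    (hα : α ∈ Set.Ioo (1/2 : ℝ) 1) (hμα : μ < α/(1-α))
    (x₀ : ℝ) (hx₀ : x₀ = (1+α)/(2*α) - 1/(2*μ))
    (g : ℝ → ℝ → ℝ)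
    (hg : ∀ x l, g x l = Real.log (1-x) +
      (l*μ + ω*α)*x/(l + ω*(1-α) + 2*ω*α*(1-x))) :
    ∀ l : ℝ, 0 < l →
      g x₀ l = Real.log ((α - (1-α)*μ)/(2*α*μ)) + (μ + α*(μ-1))/(2*α) :=
  stmt11_general μ ω α hμ hω hα x₀ hx₀ g hg
end

section
/- Define ĥ(θ) = 2·log(1-θ) - log(7+θ²) + (3+θ)/(2(1-θ)) for θ ∈ [0,1). Then ĥ(0) = 3/2 - log 7 < 0, ĥ is strictly increasing on [0,1), ĥ(θ) → ∞ as θ → 1⁻, and consequently ĥ has a unique root θ* in (0,1). -/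
/-!
Writing `ĥ = 2 log(1 - θ) + 2/(1 - θ) - 1/2 - log(7 + θ²)` gives
`ĥ'(θ) = 2θ/(1 - θ)² - 2θ/(7 + θ²)`, which is positive on `(0, 1)` because `(1 - θ)² < 7 + θ²`.
The bound `log u ≥ 1 - log 2 - 1/(2u)` (i.e. `log x ≥ 1 - 1/x` at `x = 2u`) turns the first two
terms into at least `1/(1 - θ) + 2 - 2 log 2`, so `ĥ θ ≥ 1/(1 - θ) + 3/2 - 5 log 2 → ∞`. Since
`ĥ 0 = 3/2 - log 7 < 0`, the intermediate value theorem and strict monotonicity give the root.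
-/

open Real Filter Set Topology

noncomputable def hHat (θ : ℝ) : ℝ :=
  2 * log (1 - θ) - log (7 + θ ^ 2) + (3 + θ) / (2 * (1 - θ))

lemma three_halves_lt_log_seven : (3 / 2 : ℝ) < log 7 := by
  have hexp : exp (3 / 2) ^ 2 = exp 3 := by rw [← exp_nat_mul]; norm_num
  have h3 : exp 3 < 27 := by
    calc exp 3 = exp 1 ^ 3 := by rw [← exp_nat_mul]; norm_num
      _ < 3 ^ 3 := by gcongr; exact exp_one_lt_three
      _ = 27 := by norm_num
  rw [lt_log_iff_exp_lt (by norm_num)]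
  nlinarith [exp_pos (3 / 2)]

lemma hHat_zero : hHat 0 = 3 / 2 - log 7 := by
  norm_num [hHat]
  ring

lemma hasDerivAt_hHat {θ : ℝ} (hθ : θ ≠ 1) :
    HasDerivAt hHat (2 * θ / (1 - θ) ^ 2 - 2 * θ / (7 + θ ^ 2)) θ := by
  have hu : 1 - θ ≠ 0 := sub_ne_zero.mpr hθ.symm
  have hv : 7 + θ ^ 2 ≠ 0 := by positivity
  have h1 : HasDerivAt (fun x : ℝ => 1 - x) (-1) θ := (hasDerivAt_id θ).const_sub 1
  have h2 : HasDerivAt (fun x : ℝ => 7 + x ^ 2) (2 * θ) θ := by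
    simpa using (hasDerivAt_pow 2 θ).const_add 7
  have h3 : HasDerivAt (fun x : ℝ => 3 + x) 1 θ := (hasDerivAt_id θ).const_add 3
  exact ((((h1.log hu).const_mul 2).sub (h2.log hv)).add
    (h3.div (h1.const_mul 2) (by simpa))).congr_deriv (by field_simp; ring)

lemma continuousOn_hHat : ContinuousOn hHat (Ico 0 1) := fun _ hx =>
  (hasDerivAt_hHat hx.2.ne).continuousAt.continuousWithinAt

lemma strictMonoOn_hHat : StrictMonoOn hHat (Ico 0 1) := by
  refine strictMonoOn_of_hasDerivWithinAt_pos (convex_Ico 0 1) continuousOn_hHat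
    (fun x hx => (hasDerivAt_hHat ?_).hasDerivWithinAt) (fun x hx => ?_)
  · exact (interior_subset hx : x ∈ Ico (0 : ℝ) 1).2.ne
  · rw [interior_Ico] at hx
    obtain ⟨hx0, hx1⟩ := hx
    have hu : 0 < (1 - x) ^ 2 := by have := sub_pos.mpr hx1; positivity
    have := div_lt_div_of_pos_left (by positivity : 0 < 2 * x) hu
      (by nlinarith : (1 - x) ^ 2 < 7 + x ^ 2)
    linarith

lemma inv_one_sub_add_le_hHat {θ : ℝ} (h0 : 0 ≤ θ) (h1 : θ < 1) :
    (1 - θ)⁻¹ + (3 / 2 - 5 * log 2) ≤ hHat θ := by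
  have hu : 0 < 1 - θ := sub_pos.mpr h1
  have hlog : 1 - 2⁻¹ * (1 - θ)⁻¹ ≤ log 2 + log (1 - θ) := by
    rw [← log_mul two_ne_zero hu.ne', ← mul_inv]
    exact one_sub_inv_le_log_of_pos (by positivity)
  have hlog8 : log (7 + θ ^ 2) ≤ 3 * log 2 := by
    rw [← log_rpow two_pos]
    exact log_le_log (by positivity) (by norm_num; nlinarith)
  have hfrac : (3 + θ) / (2 * (1 - θ)) = 2 * (1 - θ)⁻¹ - 1 / 2 := by
    field_simp
    ring
  rw [hHat, hfrac]
  linarith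

lemma tendsto_hHat : Tendsto hHat (𝓝[<] 1) atTop := by
  have hu : Tendsto (fun θ : ℝ => 1 - θ) (𝓝[<] 1) (𝓝[>] 0) := by
    have := (map_subLeft_nhdsLT (c := (1 : ℝ)) (a := 1)).le
    rwa [sub_self] at this
  refine tendsto_atTop_mono' _ ?_
    (tendsto_atTop_add_const_right _ (3 / 2 - 5 * log 2) (tendsto_inv_nhdsGT_zero.comp hu))
  filter_upwards [Ioo_mem_nhdsLT zero_lt_one] with θ hθ
  exact inv_one_sub_add_le_hHat hθ.1.le hθ.2

lemma existsUnique_zero_of_strictMonoOn {f : ℝ → ℝ} {a b : ℝ} (hab : a < b)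
    (hcont : ContinuousOn f (Ico a b)) (hmono : StrictMonoOn f (Ico a b)) (ha : f a < 0)
    (hb : Tendsto f (𝓝[<] b) atTop) : ∃! x, x ∈ Ioo a b ∧ f x = 0 := by
  obtain ⟨c, hfc, hc⟩ := ((hb.eventually_gt_atTop 0).and (Ioo_mem_nhdsLT hab)).exists
  obtain ⟨x, hx, hfx⟩ := intermediate_value_Ioo hc.1.le
    (hcont.mono (Icc_subset_Ico_right hc.2)) ⟨ha, hfc⟩
  have hxab : x ∈ Ioo a b := ⟨hx.1, hx.2.trans hc.2⟩
  refine ⟨x, ⟨hxab, hfx⟩, fun y ⟨hy, hfy⟩ => ?_⟩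
  exact hmono.injOn (Ioo_subset_Ico_self hy) (Ioo_subset_Ico_self hxab) (hfy.trans hfx.symm)

theorem stmt14 (h : ℝ → ℝ)
    (hh : ∀ θ, h θ = 2*Real.log (1-θ) - Real.log (7+θ^2) + (3+θ)/(2*(1-θ))) :
    h 0 = 3/2 - Real.log 7 ∧ h 0 < 0 ∧
    StrictMonoOn h (Set.Ico (0:ℝ) 1) ∧
    Filter.Tendsto h (nhdsWithin 1 (Set.Iio 1)) Filter.atTop ∧
    ∃! θ, θ ∈ Set.Ioo (0:ℝ) 1 ∧ h θ = 0 := by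
  obtain rfl : h = hHat := funext hh
  have hneg : hHat 0 < 0 := by
    rw [hHat_zero]
    linarith [three_halves_lt_log_seven]
  exact ⟨hHat_zero, hneg, strictMonoOn_hHat, tendsto_hHat,
    existsUnique_zero_of_strictMonoOn zero_lt_one continuousOn_hHat strictMonoOn_hHat hneg
      tendsto_hHat⟩
end
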